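/- (Restriction property of Cholesky-normalized Schur complements.) Let ρ, τ₁', τ₁'', τ₂ be finite index types, set τ₁ := τ₁' ⊕ τ₁'', and let A be a real matrix indexed by ρ ⊕ τ₁ ⊕ τ₂ whose block A_{ρρ} is invertible. For index blocks a, b ∈ {τ₁, τ₂, τ₁'} define the Schur complement with respect to ρ by S(a,b) := A_{ab} − A_{aρ}·A_{ρρ}^{−1}·A_{ρb}. Suppose C = [[C₁, 0],[X, C₂]] is a block lower triangular matrix over τ₁ = τ₁' ⊕ τ₁'' with C₁ and C₂ invertible and C·Cᵀ = S(τ₁, τ₁). Then C₁·C₁ᵀ = S(τ₁', τ₁'), and the submatrix of S(τ₂, τ₁)·(Cᵀ)^{−1} consisting of the columns indexed by τ₁' equals S(τ₂, τ₁')·(C₁ᵀ)^{−1}. -/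

import Mathlib

/-! Taking Schur complements commutes with restricting rows and columns. Since `C` is block lower
triangular, the `τ₁'`-block of `C Cᵀ` is `C₁ C₁ᵀ`, and `(Cᵀ)⁻¹` is block upper triangular with
`τ₁'`-block `(C₁ᵀ)⁻¹`, so the `τ₁'`-columns of `M (Cᵀ)⁻¹` depend only on the `τ₁'`-columns of `M`. -/

open Matrix

variable {ρ τ₁' τ₁'' τ₂ : Type*}

/-- The Schur complement, with respect to the `ρ`-block, of the submatrix of `A` with
rows indexed (via `f`) by `a` and columns indexed (via `g`) by `b`:
`S(a,b) = A_{ab} - A_{aρ} A_{ρρ}⁻¹ A_{ρb}`. -/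
noncomputable def schurBlock {a b : Type*} [Fintype ρ] [DecidableEq ρ]
    (A : Matrix (ρ ⊕ (τ₁' ⊕ τ₁'') ⊕ τ₂) (ρ ⊕ (τ₁' ⊕ τ₁'') ⊕ τ₂) ℝ)
    (f : a → ρ ⊕ (τ₁' ⊕ τ₁'') ⊕ τ₂) (g : b → ρ ⊕ (τ₁' ⊕ τ₁'') ⊕ τ₂) : Matrix a b ℝ :=
  A.submatrix f g -
    A.submatrix f Sum.inl * (A.submatrix Sum.inl Sum.inl)⁻¹ * A.submatrix Sum.inl g

theorem schurBlock_submatrix {a b a' b' : Type*} [Fintype ρ] [DecidableEq ρ]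
    (A : Matrix (ρ ⊕ (τ₁' ⊕ τ₁'') ⊕ τ₂) (ρ ⊕ (τ₁' ⊕ τ₁'') ⊕ τ₂) ℝ)
    (f : a → ρ ⊕ (τ₁' ⊕ τ₁'') ⊕ τ₂) (g : b → ρ ⊕ (τ₁' ⊕ τ₁'') ⊕ τ₂)
    (e : a' → a) (e' : b' → b) :
    (schurBlock A f g).submatrix e e' = schurBlock A (f ∘ e) (g ∘ e') := by
  ext i j
  simp [schurBlock, mul_apply]

namespace Matrix

variable {l m n o p α : Type*}

theorem toBlocks₁₁_fromBlocks_zero₁₂_mul_transpose [Fintype l] [Fintype p]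
    [NonUnitalNonAssocSemiring α] (A : Matrix n l α) (C : Matrix o l α) (D : Matrix o p α) :
    (fromBlocks A 0 C D * (fromBlocks A 0 C D)ᵀ).toBlocks₁₁ = A * Aᵀ := by
  simp [fromBlocks_transpose, fromBlocks_multiply]

theorem toCols₁_mul_inv_fromBlocks_zero₂₁ [Fintype n] [Fintype o] [DecidableEq n]
    [DecidableEq o] [CommRing α] (M : Matrix m (n ⊕ o) α) (A : Matrix n n α)
    (B : Matrix n o α) (D : Matrix o o α) (hAD : IsUnit A ↔ IsUnit D) :
    (M * (fromBlocks A B 0 D)⁻¹).toCols₁ = M.toCols₁ * A⁻¹ := by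
  rw [inv_fromBlocks_zero₂₁_of_isUnit_iff A B D hAD, ← fromCols_toCols M, fromCols_mul_fromBlocks]
  simp

end Matrix

theorem schur_cholesky_restriction_general
    [Fintype ρ] [Fintype τ₁'] [Fintype τ₁'']
    [DecidableEq ρ] [DecidableEq τ₁'] [DecidableEq τ₁'']
    (A : Matrix (ρ ⊕ (τ₁' ⊕ τ₁'') ⊕ τ₂) (ρ ⊕ (τ₁' ⊕ τ₁'') ⊕ τ₂) ℝ)
    (C₁ : Matrix τ₁' τ₁' ℝ) (X : Matrix τ₁'' τ₁' ℝ) (C₂ : Matrix τ₁'' τ₁'' ℝ)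
    (hC₁ : IsUnit C₁) (hC₂ : IsUnit C₂)
    (hC : (Matrix.fromBlocks C₁ 0 X C₂) * (Matrix.fromBlocks C₁ 0 X C₂)ᵀ =
      schurBlock A (fun i : τ₁' ⊕ τ₁'' => Sum.inr (Sum.inl i))
        (fun i : τ₁' ⊕ τ₁'' => Sum.inr (Sum.inl i))) :
    C₁ * C₁ᵀ =
      schurBlock A (fun i : τ₁' => Sum.inr (Sum.inl (Sum.inl i)))
        (fun i : τ₁' => Sum.inr (Sum.inl (Sum.inl i))) ∧
    (schurBlock A (fun i : τ₂ => Sum.inr (Sum.inr i))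
          (fun i : τ₁' ⊕ τ₁'' => Sum.inr (Sum.inl i)) *
        ((Matrix.fromBlocks C₁ 0 X C₂)ᵀ)⁻¹).submatrix id Sum.inl =
      schurBlock A (fun i : τ₂ => Sum.inr (Sum.inr i))
          (fun i : τ₁' => Sum.inr (Sum.inl (Sum.inl i))) * (C₁ᵀ)⁻¹ := by
  constructor
  · rw [← toBlocks₁₁_fromBlocks_zero₁₂_mul_transpose C₁ X C₂, hC]
    exact schurBlock_submatrix _ _ _ Sum.inl Sum.inl
  · rw [fromBlocks_transpose, transpose_zero]
    exact toCols₁_mul_inv_fromBlocks_zero₂₁ _ _ _ _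
      (iff_of_true ((isUnit_transpose _).2 hC₁) ((isUnit_transpose _).2 hC₂))

/-- Restriction property of Cholesky-normalized Schur complements: if `C = [[C₁,0],[X,C₂]]`
is a block Cholesky factor of `S(τ₁,τ₁)` with `τ₁ = τ₁' ⊕ τ₁''`, then `C₁ C₁ᵀ = S(τ₁',τ₁')`
and the `τ₁'`-columns of `S(τ₂,τ₁) (Cᵀ)⁻¹` are `S(τ₂,τ₁') (C₁ᵀ)⁻¹`. -/
theorem schur_cholesky_restriction
    [Fintype ρ] [Fintype τ₁'] [Fintype τ₁''] [Fintype τ₂]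
    [DecidableEq ρ] [DecidableEq τ₁'] [DecidableEq τ₁''] [DecidableEq τ₂]
    (A : Matrix (ρ ⊕ (τ₁' ⊕ τ₁'') ⊕ τ₂) (ρ ⊕ (τ₁' ⊕ τ₁'') ⊕ τ₂) ℝ)
    (hρ : IsUnit (A.submatrix (Sum.inl : ρ → ρ ⊕ (τ₁' ⊕ τ₁'') ⊕ τ₂) Sum.inl))
    (C₁ : Matrix τ₁' τ₁' ℝ) (X : Matrix τ₁'' τ₁' ℝ) (C₂ : Matrix τ₁'' τ₁'' ℝ)
    (hC₁ : IsUnit C₁) (hC₂ : IsUnit C₂)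
    (hC : (Matrix.fromBlocks C₁ 0 X C₂) * (Matrix.fromBlocks C₁ 0 X C₂)ᵀ =
      schurBlock A (fun i : τ₁' ⊕ τ₁'' => Sum.inr (Sum.inl i))
        (fun i : τ₁' ⊕ τ₁'' => Sum.inr (Sum.inl i))) :
    C₁ * C₁ᵀ =
      schurBlock A (fun i : τ₁' => Sum.inr (Sum.inl (Sum.inl i)))
        (fun i : τ₁' => Sum.inr (Sum.inl (Sum.inl i))) ∧
    (schurBlock A (fun i : τ₂ => Sum.inr (Sum.inr i))
          (fun i : τ₁' ⊕ τ₁'' => Sum.inr (Sum.inl i)) *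
        ((Matrix.fromBlocks C₁ 0 X C₂)ᵀ)⁻¹).submatrix id Sum.inl =
      schurBlock A (fun i : τ₂ => Sum.inr (Sum.inr i))
          (fun i : τ₁' => Sum.inr (Sum.inl (Sum.inl i))) * (C₁ᵀ)⁻¹ :=
  schur_cholesky_restriction_general A C₁ X C₂ hC₁ hC₂ hC
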